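/- Let $B$ be a symmetric nonnegative $N \times N$ matrix, $\gamma \in [0,1)$, $\mu > 0$, and $P_i^A \in [0,1]$ for each $i$. Define the matrix $H$ by $h_{ij} = [1 - (1-\gamma) P_i^A] b_{ji}$. If a nonzero nonnegative vector $\varepsilon$ satisfies $\mu \varepsilon_i = \beta^U [1 - (1-\gamma) P_i^A] \sum_j b_{ji} \varepsilon_j$ for all $i$ with $\beta^U > 0$, then $\mu / \beta^U$ is an eigenvalue of $H$, and hence $\beta^U \ge \mu / \Lambda_{\max}$ where $\Lambda_{\max}$ is the largest eigenvalue (in absolute value) of $H$. -/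

import Mathlib

/-!
A steady state `ε ≠ 0` of the linearised dynamics is exactly an eigenvector of `H` for the
eigenvalue `μ / β^U`, so `μ / β^U` is a root of the characteristic polynomial of `H`. Its
modulus is therefore at most `Λ_max`, which rearranges to `μ / Λ_max ≤ β^U`.
-/

open Matrix Polynomial

theorem Matrix.isRoot_charpoly_of_mulVec_eq_smul {K n : Type*} [Field K] [Fintype n]
    [DecidableEq n] {A : Matrix n n K} {c : K} {v : n → K} (hv : v ≠ 0)
    (hAv : A *ᵥ v = c • v) : A.charpoly.IsRoot c := by
  rw [IsRoot, eval_charpoly, ← exists_mulVec_eq_zero_iff]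
  refine ⟨v, hv, ?_⟩
  rw [sub_mulVec, hAv, scalar_apply, ← smul_one_eq_diagonal, smul_mulVec, one_mulVec, sub_self]

theorem Matrix.isRoot_charpoly_map {R S n : Type*} [CommRing R] [CommRing S] [Fintype n]
    [DecidableEq n] {A : Matrix n n R} {c : R} (hc : A.charpoly.IsRoot c) (f : R →+* S) :
    (A.map f).charpoly.IsRoot (f c) := by
  rw [charpoly_map]
  exact hc.map

theorem div_le_of_abs_div_le {a b Λ : ℝ} (hb : 0 < b) (h : |a / b| ≤ Λ) : a / Λ ≤ b := by
  rcases le_or_gt a 0 with ha | ha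
  · exact (div_nonpos_of_nonpos_of_nonneg ha ((abs_nonneg _).trans h)).trans hb.le
  · have hab : a / b ≤ Λ := (le_abs_self _).trans h
    have hΛ : 0 < Λ := (div_pos ha hb).trans_le hab
    rw [div_le_iff₀ hΛ, mul_comm]
    exact (div_le_iff₀ hb).mp hab

theorem mulVec_eq_smul_of_steady_state {N : ℕ} {B H : Matrix (Fin N) (Fin N) ℝ}
    {γ μ βU : ℝ} {PA ε : Fin N → ℝ} (hβU : βU ≠ 0)
    (hH : ∀ i j, H i j = (1 - (1 - γ) * PA i) * B j i)
    (heq : ∀ i, μ * ε i = βU * (1 - (1 - γ) * PA i) * ∑ j, B j i * ε j) :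
    H *ᵥ ε = (μ / βU) • ε := by
  funext i
  have hrow : (H *ᵥ ε) i = (1 - (1 - γ) * PA i) * ∑ j, B j i * ε j := by
    simp only [mulVec, dotProduct, hH, Finset.mul_sum, mul_assoc]
  rw [hrow, Pi.smul_apply, smul_eq_mul, div_mul_eq_mul_div, eq_div_iff hβU, heq i]
  ring

theorem epidemic_threshold_eigenvalue_general
    (N : ℕ) (B : Matrix (Fin N) (Fin N) ℝ)
    (γ μ βU Λmax : ℝ) (hβU : 0 < βU)
    (PA : Fin N → ℝ)
    (H : Matrix (Fin N) (Fin N) ℝ)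
    (hH : ∀ i j, H i j = (1 - (1 - γ) * PA i) * B j i)
    (hΛ : ∀ z : ℂ, (H.map (fun x : ℝ => (x : ℂ))).charpoly.IsRoot z → ‖z‖ ≤ Λmax)
    (ε : Fin N → ℝ) (hεne : ε ≠ 0)
    (heq : ∀ i, μ * ε i = βU * (1 - (1 - γ) * PA i) * ∑ j, B j i * ε j) :
    H.charpoly.IsRoot (μ / βU) ∧ μ / Λmax ≤ βU := by
  have hroot : H.charpoly.IsRoot (μ / βU) :=
    isRoot_charpoly_of_mulVec_eq_smul hεne (mulVec_eq_smul_of_steady_state hβU.ne' hH heq)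
  have hbound : ‖((μ / βU : ℝ) : ℂ)‖ ≤ Λmax := hΛ _ (isRoot_charpoly_map hroot Complex.ofRealHom)
  rw [Complex.norm_real, Real.norm_eq_abs] at hbound
  exact ⟨hroot, div_le_of_abs_div_le hβU hbound⟩

/-- Theorem 2 of the paper: a nonzero nonnegative steady-state infection vector `ε`
satisfying `μ εᵢ = β^U [1-(1-γ)Pᵢ^A] ∑ⱼ b_{ji} εⱼ` forces `μ/β^U` to be an eigenvalue
of the matrix `H` with `h_{ij} = [1-(1-γ)Pᵢ^A] b_{ji}`, hence `β^U ≥ μ/Λ_max` where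
`Λ_max` bounds the absolute values of all (complex) eigenvalues of `H`. -/
theorem epidemic_threshold_eigenvalue
    (N : ℕ) (B : Matrix (Fin N) (Fin N) ℝ)
    (hBsymm : B.IsSymm) (hBnn : ∀ i j, 0 ≤ B i j)
    (γ μ βU Λmax : ℝ) (hγ0 : 0 ≤ γ) (hγ1 : γ < 1) (hμ : 0 < μ) (hβU : 0 < βU)
    (PA : Fin N → ℝ) (hPA : ∀ i, 0 ≤ PA i ∧ PA i ≤ 1)
    (H : Matrix (Fin N) (Fin N) ℝ)
    (hH : ∀ i j, H i j = (1 - (1 - γ) * PA i) * B j i)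
    (hΛ : ∀ z : ℂ, (H.map (fun x : ℝ => (x : ℂ))).charpoly.IsRoot z → ‖z‖ ≤ Λmax)
    (ε : Fin N → ℝ) (hεnn : ∀ i, 0 ≤ ε i) (hεne : ε ≠ 0)
    (heq : ∀ i, μ * ε i = βU * (1 - (1 - γ) * PA i) * ∑ j, B j i * ε j) :
    H.charpoly.IsRoot (μ / βU) ∧ μ / Λmax ≤ βU :=
  epidemic_threshold_eigenvalue_general N B γ μ βU Λmax hβU PA H hH hΛ ε hεne heq
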